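/- arXiv:2001.08659 — 5 statements merged into one kernel-verified Lean document; each statement's English description precedes it below -/
import Mathlib

section
/- The formal power series T(z) = Σ_{n≥1} n^{n-1} zⁿ/n! satisfies the functional equation T(z) = z · exp(T(z)). -/
open PowerSeries

/-- Composition `F ∘ S` of formal power series, valid when `S` has zero constant
term: the `n`-th coefficient only depends on the first `n+1` terms of the sum
`Σ_k (coeff k F) S^k`. -/
noncomputable def psComp {A : Type*} [CommRing A] (F S : PowerSeries A) : PowerSeries A :=
  PowerSeries.mk fun n =>
    coeff (R := A) n (∑ k ∈ Finset.range (n + 1), PowerSeries.C (R := A) (coeff (R := A) k F) * S ^ k)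

/-- The EGF of rooted labeled trees, `T(z) = Σ_{n≥1} n^{n-1} zⁿ/n!`. -/
noncomputable def treeT : PowerSeries ℚ :=
  PowerSeries.mk fun n => if n = 0 then 0 else (n : ℚ) ^ (n - 1) / (n.factorial : ℚ)

/-!
Put `G(z) = Σ_{n≥0} (n+1)^{n-1} zⁿ/n!`, so that `T = z G`. In exponential generating
functions, `G' = G T'` is Abel's identity
`Σ_k C(n,k) (k+1)^{k-1} (y+n-k)^{n-k} = (y+n+1)^n` at `y = 1`. Since `G(0) = 1`, this
logarithmic-derivative equation forces `G = exp(T)`, whence `T = z exp(T)`.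

Abel's identity is proved by induction on `n` for polynomials in `y`: the `y`-derivative of
the left side is `n` times the left side for `n - 1` at `y + 1`, and at `y = -(n+1)` the left
side is the `n`-th forward difference of `r ↦ r^{n-1}`, which vanishes.
-/

open Finset
open scoped Nat

section Abel

open Polynomial

variable {R S : Type*} [CommRing R] [CommRing S]

-- `k - 1` truncates at `k = 0`; harmless, as the base `k + 1` is then `1`.
def abelSum (n : ℕ) (y : R) : R :=
  ∑ k ∈ range (n + 1),
    (n.choose k : R) * ((k : R) + 1) ^ (k - 1) * (y + (n - k : ℕ)) ^ (n - k)

lemma map_abelSum {F : Type*} [FunLike F R S] [RingHomClass F R S] (f : F) (n : ℕ) (y : R) :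
    f (abelSum n y) = abelSum n (f y) := by
  simp [abelSum, map_sum]

lemma abelSum_neg_add_one_eq_zero {n : ℕ} (hn : n ≠ 0) : abelSum n (-((n : R) + 1)) = 0 := by
  have hΔ := congrFun (fwdDiff_iter_pow_eq_zero_of_lt (R := R) (by omega : n - 1 < n)) 1
  rw [fwdDiff_iter_eq_sum_shift, Pi.zero_apply] at hΔ
  rw [← hΔ, abelSum]
  refine sum_congr rfl fun k hk => ?_
  have hkn : k ≤ n := Nat.lt_succ_iff.mp (mem_range.mp hk)
  have hy : -((n : R) + 1) + (n - k : ℕ) = -((k : R) + 1) := by push_cast [hkn]; ring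
  have hpow : ((k : R) + 1) ^ (k - 1) * ((k : R) + 1) ^ (n - k) = ((k : R) + 1) ^ (n - 1) := by
    rcases k with _ | k
    · simp
    · rw [← pow_add]; congr 1; omega
  rw [hy, neg_pow, zsmul_eq_mul, nsmul_eq_mul, mul_one, add_comm (1 : R), ← hpow]
  push_cast
  ring

lemma derivative_abelSum_X (n : ℕ) :
    derivative (abelSum (n + 1) (Polynomial.X : ℤ[X])) =
      ((n : ℤ[X]) + 1) * abelSum n (Polynomial.X + 1) := by
  simp only [abelSum, Polynomial.derivative_sum, Polynomial.derivative_mul,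
    Polynomial.derivative_pow, Polynomial.derivative_add, Polynomial.derivative_X,
    Polynomial.derivative_natCast, Polynomial.derivative_one, map_natCast, mul_zero, zero_mul,
    zero_add, add_zero, mul_one]
  rw [sum_range_succ, Nat.sub_self, Nat.cast_zero, zero_mul, mul_zero, add_zero, mul_sum]
  refine sum_congr rfl fun k hk => ?_
  have hexp : n + 1 - k = n - k + 1 := by have := mem_range.mp hk; omega
  have hchoose : ((n + 1).choose k : ℤ[X]) * ((n - k : ℕ) + 1) =
      n.choose k * ((n : ℤ[X]) + 1) := by
    exact_mod_cast ((Nat.choose_mul_succ_eq n k).trans (by rw [hexp])).symm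
  rw [hexp, Nat.add_sub_cancel, Nat.cast_succ, add_assoc Polynomial.X,
    add_comm ((n - k : ℕ) : ℤ[X]) 1, ← add_assoc Polynomial.X]
  linear_combination
    ((k : ℤ[X]) + 1) ^ (k - 1) * (Polynomial.X + 1 + ((n - k : ℕ) : ℤ[X])) ^ (n - k) * hchoose

lemma abelSum_X (n : ℕ) :
    abelSum n (Polynomial.X : ℤ[X]) = (Polynomial.X + ((n : ℤ[X]) + 1)) ^ n := by
  induction n with
  | zero => simp [abelSum]
  | succ n ih =>
    rw [← sub_eq_zero]
    set D := abelSum (n + 1) (Polynomial.X : ℤ[X]) -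
      (Polynomial.X + (((n + 1 : ℕ) : ℤ[X]) + 1)) ^ (n + 1)
    have hD : derivative D = 0 := by
      have ih' := congrArg (aeval (Polynomial.X + 1 : ℤ[X])) ih
      rw [map_abelSum, Polynomial.aeval_X, map_pow, map_add, Polynomial.aeval_X, map_add,
        map_natCast, map_one] at ih'
      rw [derivative_sub, derivative_abelSum_X, ih', Polynomial.derivative_pow,
        Polynomial.derivative_add, Polynomial.derivative_X]
      simp only [Polynomial.derivative_add, derivative_natCast, Polynomial.derivative_one,
        map_natCast]
      push_cast
      ring
    have hD0 : D.eval (-(((n + 1 : ℕ) : ℤ) + 1)) = 0 := by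
      rw [eval_sub, ← coe_evalRingHom, map_abelSum, coe_evalRingHom, eval_X,
        abelSum_neg_add_one_eq_zero n.succ_ne_zero]
      simp only [eval_pow, eval_add, eval_X, eval_natCast, eval_one]
      rw [neg_add_cancel, zero_pow n.succ_ne_zero, sub_zero]
    rw [eq_C_of_derivative_eq_zero hD, eval_C] at hD0
    rw [eq_C_of_derivative_eq_zero hD, hD0, C_0]

theorem abelSum_eq (n : ℕ) (y : R) : abelSum n y = (y + ((n : R) + 1)) ^ n := by
  simpa [map_abelSum] using congrArg (aeval y) (abelSum_X n)

end Abel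

lemma psComp_eq_subst {A : Type*} [CommRing A] (F : A⟦X⟧) {S : A⟦X⟧}
    (hS : constantCoeff S = 0) : psComp F S = F.subst S := by
  ext n
  have hvanish : ∀ d ∉ range (n + 1), coeff d F • coeff n (S ^ d) = 0 := fun d hd => by
    rw [coeff_of_lt_order n ((Nat.cast_lt.mpr (by simpa using hd)).trans_le
      (le_order_pow_of_constantCoeff_eq_zero d hS)), smul_zero]
  rw [psComp, coeff_mk, coeff_subst' (.of_constantCoeff_zero' hS),
    finsum_eq_sum_of_support_subset _ (Function.support_subset_iff'.mpr hvanish), map_sum]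
  simp only [coeff_C_mul, smul_eq_mul]

lemma constantCoeff_subst_of_constantCoeff_eq_zero {A : Type*} [CommRing A] (F : A⟦X⟧)
    {S : A⟦X⟧} (hS : constantCoeff S = 0) : constantCoeff (F.subst S) = constantCoeff F := by
  rw [← coeff_zero_eq_constantCoeff_apply, coeff_subst' (.of_constantCoeff_zero' hS),
    finsum_eq_single _ 0 fun d hd => by simp [coeff_zero_eq_constantCoeff_apply, hS, hd]]
  simp

lemma eq_exp_subst_of_derivative_eq_mul {K : Type*} [Field K] [CharZero K] {f g : K⟦X⟧}
    (hg : constantCoeff g = 0) (hf₀ : constantCoeff f = 1) (hf : d⁄dX K f = f * d⁄dX K g) :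
    f = (exp K).subst g := by
  set E := (exp K).subst g
  have hE : d⁄dX K E = E * d⁄dX K g := by
    rw [derivative_subst (.of_constantCoeff_zero' hg), derivative_exp]
  have hE₀ : constantCoeff E = 1 := by
    rw [constantCoeff_subst_of_constantCoeff_eq_zero _ hg, ← coeff_zero_eq_constantCoeff_apply,
      coeff_exp]
    simp
  have hEinv : E⁻¹ * E = 1 := PowerSeries.inv_mul_cancel E (by simp [hE₀])
  have hquot : f * E⁻¹ = 1 := by
    refine derivative.ext ?_ (by simp [hf₀, hE₀])
    rw [Derivation.leibniz, derivative_inv', hE, hf, derivative_one]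
    linear_combination -(f * E⁻¹ * d⁄dX K g) * hEinv
  calc f = f * E⁻¹ * E := by rw [mul_assoc, hEinv, mul_one]
    _ = E := by rw [hquot, one_mul]

lemma coeff_mk_div_factorial_mul {K : Type*} [Field K] [CharZero K] (a b : ℕ → K) (n : ℕ) :
    coeff n (mk (fun k => a k / k !) * mk fun k => b k / k !) =
      (∑ k ∈ range (n + 1), n.choose k * a k * b (n - k)) / n ! := by
  rw [coeff_mul, Nat.sum_antidiagonal_eq_sum_range_succ_mk, sum_div]
  refine sum_congr rfl fun k hk => ?_
  have : (n ! : K) ≠ 0 := Nat.cast_ne_zero.mpr n.factorial_ne_zero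
  rw [coeff_mk, coeff_mk, Nat.cast_choose K (Nat.lt_succ_iff.mp (mem_range.mp hk))]
  field_simp

noncomputable def treeTDivX : ℚ⟦X⟧ := mk fun n => ((n : ℚ) + 1) ^ (n - 1) / n !

lemma constantCoeff_treeT : constantCoeff treeT = 0 := by
  simp [treeT, ← coeff_zero_eq_constantCoeff_apply]

lemma constantCoeff_treeTDivX : constantCoeff treeTDivX = 1 := by
  simp [treeTDivX, ← coeff_zero_eq_constantCoeff_apply]

lemma treeT_eq_X_mul_treeTDivX : treeT = X * treeTDivX := by
  ext (_ | n)
  · simp [treeT]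
  rw [coeff_succ_X_mul, treeT, treeTDivX, coeff_mk, coeff_mk, if_neg n.succ_ne_zero,
    Nat.factorial_succ, Nat.add_sub_cancel]
  rcases n with _ | n
  · simp
  rw [Nat.add_sub_cancel, pow_succ]
  push_cast
  field_simp

lemma derivative_treeT : d⁄dX ℚ treeT = mk fun n => ((n : ℚ) + 1) ^ n / n ! := by
  ext n
  rw [coeff_derivative, treeT, coeff_mk, coeff_mk, if_neg n.succ_ne_zero, Nat.add_sub_cancel,
    Nat.factorial_succ]
  push_cast
  field_simp

lemma derivative_treeTDivX : d⁄dX ℚ treeTDivX = mk fun n => ((n : ℚ) + 2) ^ n / n ! := by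
  ext n
  rw [coeff_derivative, treeTDivX, coeff_mk, coeff_mk, Nat.add_sub_cancel, Nat.factorial_succ]
  push_cast
  field_simp
  ring

lemma derivative_treeTDivX_eq_mul : d⁄dX ℚ treeTDivX = treeTDivX * d⁄dX ℚ treeT := by
  ext n
  rw [derivative_treeTDivX, derivative_treeT, treeTDivX, coeff_mk_div_factorial_mul, coeff_mk]
  congr 1
  calc ((n : ℚ) + 2) ^ n = (1 + ((n : ℚ) + 1)) ^ n := by ring
    _ = abelSum n 1 := (abelSum_eq n 1).symm
    _ = _ := sum_congr rfl fun k _ => by rw [add_comm (1 : ℚ)]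

/-- `T(z) = z · exp(T(z))`. -/
theorem treeT_eq_X_mul_exp_treeT :
    treeT = X * psComp (exp ℚ) treeT := by
  calc treeT = X * treeTDivX := treeT_eq_X_mul_treeTDivX
    _ = X * (exp ℚ).subst treeT := congrArg (X * ·) <|
      eq_exp_subst_of_derivative_eq_mul constantCoeff_treeT constantCoeff_treeTDivX
        derivative_treeTDivX_eq_mul
    _ = X * psComp (exp ℚ) treeT := by rw [psComp_eq_subst _ constantCoeff_treeT]
end

section
/- Robinson's formula: the number of labeled directed acyclic graphs with n vertices and m edges equals n!·[zⁿ wᵐ] of (1+w)^{C(n,2)} divided by Σ_{k≥0} (1+w)^{−C(k,2)} (−z)^k/k!, where [zⁿ wᵐ] denotes coefficient extraction in the formal power series ring. -/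
open PowerSeries

/-- A digraph edge set on `Fin n` is acyclic if no vertex lies on a directed cycle. -/
def DigraphAcyclic {n : ℕ} (E : Finset (Fin n × Fin n)) : Prop :=
  ∀ i : Fin n, ¬ Relation.TransGen (fun a b : Fin n => (a, b) ∈ E) i i

/-- The number of labeled DAGs with `n` vertices and `m` edges. -/
noncomputable def dagCount (n m : ℕ) : ℕ :=
  Nat.card {E : Finset (Fin n × Fin n) //
    (∀ e ∈ E, e.1 ≠ e.2) ∧ E.card = m ∧ DigraphAcyclic E}

/-- Robinson's denominator `Σ_{k≥0} (1+w)^{−C(k,2)} (−z)^k/k!`, a power series in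
`z` with coefficients rational functions in `w`. -/
noncomputable def robinsonDenom : PowerSeries (RatFunc ℚ) :=
  PowerSeries.mk fun k =>
    (-1) ^ k * ((1 + RatFunc.X) ^ (k.choose 2))⁻¹ / (k.factorial : RatFunc ℚ)

/-!
Write `a_n(w)` for the sum of `w ^ #edges` over the DAGs on `n` labelled vertices. Fix a set `T`
of `k` vertices and count the DAGs in which every vertex of `T` is a source: the edges from `T` to
the other `n - k` vertices are arbitrary and the rest is a DAG on those vertices, giving
`(1 + w) ^ (k (n - k)) a_{n-k}`. Every DAG on a nonempty vertex set has a source, so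
inclusion–exclusion over `T` yields `Σ_k (-1)^k C(n,k) (1 + w)^(k (n-k)) a_{n-k} = 0` for
`n ≥ 1`.
Since `C(n,2) = C(k,2) + C(n-k,2) + k (n-k)`, this says exactly that
`Σ_n a_n z^n / (n! (1 + w)^C(n,2))` is the inverse of Robinson's denominator.
-/

namespace Robinson

open Finset Relation

def IsAcyclic {α : Type*} (E : Finset (α × α)) : Prop :=
  ∀ i : α, ¬ TransGen (fun a b : α => (a, b) ∈ E) i i

section Acyclic

variable {α β : Type*} {E F : Finset (α × α)}

theorem isAcyclic_empty : IsAcyclic (∅ : Finset (α × α)) := fun _ h => by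
  obtain ⟨_, h, -⟩ := TransGen.head'_iff.1 h
  exact notMem_empty _ h

theorem IsAcyclic.mono (hF : IsAcyclic F) (hEF : E ⊆ F) : IsAcyclic E :=
  fun i h => hF i (TransGen.mono (fun _ _ hab => hEF hab) _ _ h)

theorem IsAcyclic.fst_ne_snd (hE : IsAcyclic E) {e : α × α} (he : e ∈ E) : e.1 ≠ e.2 :=
  fun h => hE e.1 (.single (by rcases e with ⟨a, b⟩; dsimp only at h ⊢; rwa [← h] at he))

theorem IsAcyclic.image [DecidableEq β] (hE : IsAcyclic E) {f : α → β} {g : β → α}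
    (hgf : Set.LeftInvOn (Prod.map g g) (Prod.map f f) E) :
    IsAcyclic (E.image (Prod.map f f)) := by
  refine fun b hb => hE (g b) (hb.lift g fun a c hac => ?_)
  obtain ⟨e, he, hea⟩ := mem_image.1 hac
  have hga : (g a, g c) = e := by rw [← hgf he, hea]; rfl
  exact (hga ▸ he : (g a, g c) ∈ E)

/-- A cycle through edges that all end outside `T` never visits `T`, so it only uses edges
of `F`. -/
theorem IsAcyclic.of_forall_snd_notMem {T : Finset α} (hF : IsAcyclic F)
    (hin : ∀ e ∈ E, e.2 ∉ T) (hout : ∀ e ∈ E, e.1 ∉ T → e ∈ F) : IsAcyclic E := by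
  have key : ∀ {b c}, TransGen (fun a b => (a, b) ∈ E) b c → b ∉ T →
      TransGen (fun a b => (a, b) ∈ F) b c := by
    intro b c h
    induction h using TransGen.head_induction_on with
    | single h => exact fun hb => .single (hout _ h hb)
    | head h _ ih => exact fun hb => .head (hout _ h hb) (ih (hin _ h))
  intro a hcyc
  obtain ⟨b, -, hba⟩ := TransGen.tail'_iff.1 hcyc
  exact hF a (key hcyc (hin _ hba))

theorem IsAcyclic.exists_source [Finite α] (hE : IsAcyclic E) {V : Finset α}
    (hEV : E ⊆ V ×ˢ V) (hV : V.Nonempty) : ∃ v ∈ V, ∀ e ∈ E, e.2 ≠ v := by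
  let r := TransGen fun a b : α => (a, b) ∈ E
  have : IsTrans α r := ⟨fun _ _ _ => TransGen.trans⟩
  have : Std.Irrefl r := ⟨hE⟩
  obtain ⟨v, hv, hmin⟩ := (Finite.wellFounded_of_trans_of_irrefl r).has_min V hV
  refine ⟨v, hv, fun e he hev => hmin e.1 (mem_product.1 (hEV he)).1 (.single ?_)⟩
  rwa [← hev]

end Acyclic

theorem sum_powerset_pow_card {α R : Type*} [CommSemiring R] (x : R) (s : Finset α) :
    ∑ t ∈ s.powerset, x ^ #t = (1 + x) ^ #s := by
  simpa [add_comm] using sum_pow_mul_eq_add_pow x 1 s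

section DagWeight

variable {α β R : Type*} [CommSemiring R]

open Classical in
noncomputable def dagsOn (V : Finset α) : Finset (Finset (α × α)) :=
  (V ×ˢ V).powerset.filter IsAcyclic

theorem mem_dagsOn {V : Finset α} {E : Finset (α × α)} :
    E ∈ dagsOn V ↔ E ⊆ V ×ˢ V ∧ IsAcyclic E := by
  classical simp [dagsOn]

noncomputable def dagWeight (x : R) (V : Finset α) : R :=
  ∑ E ∈ dagsOn V, x ^ #E

@[simp]
theorem dagWeight_empty (x : R) : dagWeight x (∅ : Finset α) = 1 := by
  have : dagsOn (∅ : Finset α) = {∅} := by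
    ext E
    rw [mem_dagsOn, mem_singleton, empty_product, subset_empty]
    exact and_iff_left_of_imp fun h => h ▸ isAcyclic_empty
  simp [dagWeight, this]

theorem leftInvOn_prodMap {V : Finset α} {E : Finset (α × α)} {f : α → β} {g : β → α}
    (hgf : Set.LeftInvOn g f V) (hEV : E ⊆ V ×ˢ V) :
    Set.LeftInvOn (Prod.map g g) (Prod.map f f) E := fun e he => by
  obtain ⟨h1, h2⟩ := mem_product.1 (hEV he)
  exact Prod.ext (hgf h1) (hgf h2)

theorem image_prodMap_mem_dagsOn [DecidableEq β] {V : Finset α} {W : Finset β}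
    {f : α → β} {g : β → α} (hf : Set.MapsTo f V W) (hgf : Set.LeftInvOn g f V)
    {E : Finset (α × α)} (hE : E ∈ dagsOn V) : E.image (Prod.map f f) ∈ dagsOn W := by
  rw [mem_dagsOn] at hE ⊢
  refine ⟨fun e he => ?_, hE.2.image (leftInvOn_prodMap hgf hE.1)⟩
  obtain ⟨d, hd, rfl⟩ := mem_image.1 he
  obtain ⟨h1, h2⟩ := mem_product.1 (hE.1 hd)
  exact mem_product.2 ⟨hf h1, hf h2⟩

theorem image_image_prodMap [DecidableEq α] [DecidableEq β] {V : Finset α} {f : α → β}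
    {g : β → α} (hgf : Set.LeftInvOn g f V) {E : Finset (α × α)} (hE : E ∈ dagsOn V) :
    (E.image (Prod.map f f)).image (Prod.map g g) = E :=
  coe_injective (by push_cast; exact (leftInvOn_prodMap hgf (mem_dagsOn.1 hE).1).image_image)

theorem dagWeight_eq_of_invOn [DecidableEq α] [DecidableEq β] (x : R) {V : Finset α}
    {W : Finset β} {f : α → β} {g : β → α} (hf : Set.MapsTo f V W) (hg : Set.MapsTo g W V)
    (hfg : Set.InvOn g f V W) : dagWeight x V = dagWeight x W := by
  refine sum_nbij' (·.image (Prod.map f f)) (·.image (Prod.map g g))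
    (fun E hE => image_prodMap_mem_dagsOn hf hfg.1 hE)
    (fun E hE => image_prodMap_mem_dagsOn hg hfg.2 hE)
    (fun E hE => image_image_prodMap hfg.1 hE) (fun E hE => image_image_prodMap hfg.2 hE)
    fun E hE => ?_
  rw [card_image_of_injOn (leftInvOn_prodMap hfg.1 (mem_dagsOn.1 hE).1).injOn]

theorem dagWeight_eq_of_card_eq [DecidableEq α] [DecidableEq β] (x : R) {V : Finset α}
    {W : Finset β} (h : #V = #W) : dagWeight x V = dagWeight x W := by
  obtain rfl | hV := V.eq_empty_or_nonempty
  · rw [card_eq_zero.1 h.symm, dagWeight_empty, dagWeight_empty]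
  obtain ⟨b, -⟩ := card_pos.1 (h ▸ card_pos.2 hV)
  obtain ⟨a, -⟩ := hV
  have : Nonempty α := ⟨a⟩
  have : Nonempty β := ⟨b⟩
  obtain ⟨f, hf⟩ := V.finite_toSet.exists_bijOn_of_encard_eq (t := (W : Set β))
    (by simp only [Set.encard_coe_eq_coe_finsetCard, h])
  exact dagWeight_eq_of_invOn x hf.mapsTo (hf.symm hf.invOn_invFunOn.symm).mapsTo hf.invOn_invFunOn

end DagWeight

section Sources

variable {α : Type*} [DecidableEq α]

open Classical in
noncomputable def dagsWithSources (V T : Finset α) : Finset (Finset (α × α)) :=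
  (dagsOn V).filter fun E => ∀ e ∈ E, e.2 ∉ T

theorem mem_dagsWithSources {V T : Finset α} {E : Finset (α × α)} :
    E ∈ dagsWithSources V T ↔ E ∈ dagsOn V ∧ ∀ e ∈ E, e.2 ∉ T := by
  classical simp [dagsWithSources]

theorem filter_mem_of_mem_dagsWithSources {V T : Finset α} {E : Finset (α × α)}
    (hE : E ∈ dagsWithSources V T) :
    (E.filter (·.1 ∈ T), E.filter (·.1 ∉ T)) ∈ (T ×ˢ (V \ T)).powerset ×ˢ dagsOn (V \ T) := by
  obtain ⟨hE, hET⟩ := mem_dagsWithSources.1 hE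
  obtain ⟨hEV, hEac⟩ := mem_dagsOn.1 hE
  refine mem_product.2 ⟨mem_powerset.2 fun e he => ?_,
    mem_dagsOn.2 ⟨fun e he => ?_, hEac.mono (filter_subset _ _)⟩⟩ <;>
  obtain ⟨he, heT⟩ := mem_filter.1 he <;>
  obtain ⟨h1, h2⟩ := mem_product.1 (hEV he)
  · exact mem_product.2 ⟨heT, mem_sdiff.2 ⟨h2, hET e he⟩⟩
  · exact mem_product.2 ⟨mem_sdiff.2 ⟨h1, heT⟩, mem_sdiff.2 ⟨h2, hET e he⟩⟩

theorem union_mem_dagsWithSources {V T : Finset α} (hTV : T ⊆ V) {S F : Finset (α × α)}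
    (hS : S ⊆ T ×ˢ (V \ T)) (hF : F ∈ dagsOn (V \ T)) : S ∪ F ∈ dagsWithSources V T := by
  obtain ⟨hFV, hFac⟩ := mem_dagsOn.1 hF
  have hS' : ∀ e ∈ S, e.1 ∈ T ∧ e.2 ∈ V ∧ e.2 ∉ T := fun e he => by
    simpa [mem_sdiff] using mem_product.1 (hS he)
  have hF' : ∀ e ∈ F, (e.1 ∈ V ∧ e.1 ∉ T) ∧ e.2 ∈ V ∧ e.2 ∉ T := fun e he => by
    simpa [mem_sdiff] using mem_product.1 (hFV he)
  have hin : ∀ e ∈ S ∪ F, e.2 ∉ T := by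
    simp only [mem_union]
    rintro e (he | he)
    exacts [(hS' e he).2.2, (hF' e he).2.2]
  refine mem_dagsWithSources.2 ⟨mem_dagsOn.2 ⟨fun e he => ?_, ?_⟩, hin⟩
  · rcases mem_union.1 he with he | he
    · exact mem_product.2 ⟨hTV (hS' e he).1, (hS' e he).2.1⟩
    · exact mem_product.2 ⟨(hF' e he).1.1, (hF' e he).2.1⟩
  · refine hFac.of_forall_snd_notMem hin fun e he heT => ?_
    rcases mem_union.1 he with he | he
    exacts [absurd (hS' e he).1 heT, he]

/-- A DAG in which all of `T` are sources is an arbitrary set of edges from `T` to `V \ T`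
together with a DAG on `V \ T`. -/
theorem sum_dagsWithSources {R : Type*} [CommSemiring R] (x : R) {V T : Finset α}
    (hTV : T ⊆ V) :
    ∑ E ∈ dagsWithSources V T, x ^ #E = (1 + x) ^ (#T * #(V \ T)) * dagWeight x (V \ T) := by
  calc ∑ E ∈ dagsWithSources V T, x ^ #E
      = ∑ p ∈ (T ×ˢ (V \ T)).powerset ×ˢ dagsOn (V \ T), x ^ #p.1 * x ^ #p.2 := by
        refine sum_nbij' (fun E => (E.filter (·.1 ∈ T), E.filter (·.1 ∉ T)))
          (fun p => p.1 ∪ p.2) (fun E hE => filter_mem_of_mem_dagsWithSources hE)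
          (fun p hp => union_mem_dagsWithSources hTV (mem_powerset.1 (mem_product.1 hp).1)
            (mem_product.1 hp).2) (fun E _ => ?_) (fun p hp => ?_) (fun E _ => ?_)
        · exact filter_union_filter_not_eq _ E
        · obtain ⟨hS, hF⟩ := mem_product.1 hp
          have h1 : ∀ e ∈ p.1, e.1 ∈ T := fun e he => (mem_product.1 (mem_powerset.1 hS he)).1
          have h2 : ∀ e ∈ p.2, e.1 ∉ T := fun e he =>
            (mem_sdiff.1 (mem_product.1 ((mem_dagsOn.1 hF).1 he)).1).2
          ext1 <;> simp only [filter_union, filter_true_of_mem h1, filter_true_of_mem h2,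
            filter_false_of_mem h2, filter_false_of_mem fun e he => not_not.2 (h1 e he),
            union_empty, empty_union]
        · rw [← pow_add, card_filter_add_card_filter_not]
    _ = (1 + x) ^ (#T * #(V \ T)) * dagWeight x (V \ T) := by
        rw [sum_product' (f := fun s E => x ^ #s * x ^ #E), ← sum_mul_sum, sum_powerset_pow_card,
          card_product, dagWeight]

def sources (V : Finset α) (E : Finset (α × α)) : Finset α :=
  V.filter fun v => ∀ e ∈ E, e.2 ≠ v

/-- Inclusion–exclusion over the set of sources, which is nonempty for every DAG on `V`. -/
theorem sum_powerset_neg_one_pow_mul_sum_dagsWithSources [Finite α] {R : Type*} [CommRing R]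
    (x : R) {V : Finset α} (hV : V.Nonempty) :
    ∑ T ∈ V.powerset, (-1) ^ #T * ∑ E ∈ dagsWithSources V T, x ^ #E = 0 := by
  simp_rw [mul_sum]
  rw [sum_comm' (t' := dagsOn V) (s' := fun E => (sources V E).powerset) fun T E => ?_]
  · refine sum_eq_zero fun E hE => ?_
    obtain ⟨hEV, hEac⟩ := mem_dagsOn.1 hE
    obtain ⟨v, hv, hsrc⟩ := hEac.exists_source hEV hV
    have hne : (sources V E).Nonempty := ⟨v, mem_filter.2 ⟨hv, hsrc⟩⟩
    have := congrArg (Int.cast : ℤ → R) (sum_powerset_neg_one_pow_card_of_nonempty hne)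
    push_cast at this
    rw [← sum_mul, this, zero_mul]
  · simp only [mem_powerset, mem_dagsWithSources, sources, subset_iff, mem_filter]
    grind

end Sources

noncomputable def dagWeightFin {R : Type*} [CommSemiring R] (x : R) (n : ℕ) : R :=
  dagWeight x (univ : Finset (Fin n))

theorem sum_range_choose_mul_dagWeightFin {R : Type*} [CommRing R] (x : R) {n : ℕ} (hn : 0 < n) :
    ∑ k ∈ range (n + 1), (n.choose k : R) *
      ((-1) ^ k * ((1 + x) ^ (k * (n - k)) * dagWeightFin x (n - k))) = 0 := by
  have hterm : ∀ T ∈ (univ : Finset (Fin n)).powerset,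
      (-1) ^ #T * ∑ E ∈ dagsWithSources univ T, x ^ #E =
        (-1) ^ #T * ((1 + x) ^ (#T * (n - #T)) * dagWeightFin x (n - #T)) := by
    intro T hT
    have hcard : #(univ \ T) = n - #T := by
      rw [card_sdiff_of_subset (mem_powerset.1 hT), card_univ, Fintype.card_fin]
    rw [sum_dagsWithSources x (mem_powerset.1 hT), hcard, dagWeightFin,
      dagWeight_eq_of_card_eq x (W := (univ : Finset (Fin (n - #T)))) (by simp [hcard])]
  have := sum_powerset_neg_one_pow_mul_sum_dagsWithSources x
    (⟨⟨0, hn⟩, mem_univ _⟩ : (univ : Finset (Fin n)).Nonempty)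
  rw [sum_congr rfl hterm,
    sum_powerset_apply_card fun k =>
      (-1) ^ k * ((1 + x) ^ (k * (n - k)) * dagWeightFin x (n - k)),
    card_univ, Fintype.card_fin] at this
  simpa only [nsmul_eq_mul] using this

section GeneratingFunction

variable {K : Type*} [Field K] [CharZero K]

theorem choose_two_add (a b : ℕ) : (a + b).choose 2 = a.choose 2 + b.choose 2 + a * b := by
  simp [Nat.add_choose_eq, Nat.antidiagonal_succ]
  ring

/-- The `k`-th summand of the `n = k + j` coefficient of `robinsonDenom * dagSeries`, brought to
the common denominator `n! (1 + x) ^ C(n, 2)`. -/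
theorem mul_div_eq_inv_mul_choose (u a : K) (hu : u ≠ 0) (k j : ℕ) :
    (-1) ^ k * (u ^ k.choose 2)⁻¹ / k.factorial * (a / (j.factorial * u ^ j.choose 2)) =
      ((k + j).factorial * u ^ (k + j).choose 2)⁻¹ *
        ((k + j).choose k * ((-1) ^ k * (u ^ (k * j) * a))) := by
  have hc : ((k + j).choose j : K) ≠ 0 := Nat.cast_ne_zero.2 (Nat.choose_pos le_add_self).ne'
  rw [choose_two_add, Nat.choose_symm_add, ← Nat.add_choose_mul_factorial_mul_factorial]
  push_cast
  field_simp
  ring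

noncomputable def dagSeries (x : K) : PowerSeries K :=
  mk fun k => dagWeightFin x k / (k.factorial * (1 + x) ^ k.choose 2)

theorem mk_mul_dagSeries (x : K) (hx : 1 + x ≠ 0) :
    (mk fun k => (-1) ^ k * ((1 + x) ^ k.choose 2)⁻¹ / (k.factorial : K)) * dagSeries x = 1 := by
  ext n
  rw [coeff_mul, Nat.sum_antidiagonal_eq_sum_range_succ_mk, coeff_one]
  rcases Nat.eq_zero_or_pos n with rfl | hn
  · simp [dagSeries, dagWeightFin, univ_eq_empty]
  have hterm : ∀ k ∈ range (n + 1), coeff k (mk fun k => (-1) ^ k *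
        ((1 + x) ^ k.choose 2)⁻¹ / (k.factorial : K)) * coeff (n - k) (dagSeries x) =
      (n.factorial * (1 + x) ^ n.choose 2)⁻¹ * (n.choose k *
        ((-1) ^ k * ((1 + x) ^ (k * (n - k)) * dagWeightFin x (n - k)))) := by
    intro k hk
    obtain ⟨j, rfl⟩ := Nat.exists_eq_add_of_le (Nat.lt_succ_iff.1 (mem_range.1 hk))
    rw [dagSeries, coeff_mk, coeff_mk, Nat.add_sub_cancel_left]
    exact mul_div_eq_inv_mul_choose _ _ hx k j
  rw [sum_congr rfl hterm, ← mul_sum, sum_range_choose_mul_dagWeightFin x hn, mul_zero,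
    if_neg hn.ne']

theorem one_add_X_ne_zero {F : Type*} [Field F] : (1 + RatFunc.X : RatFunc F) ≠ 0 := by
  simpa [add_comm] using RatFunc.algebraMap_ne_zero (Polynomial.X_add_C_ne_zero (1 : F))

theorem inv_robinsonDenom : robinsonDenom⁻¹ = dagSeries RatFunc.X := by
  refine (PowerSeries.inv_eq_iff_mul_eq_one ?_).2 ?_
  · simp [robinsonDenom]
  · rw [mul_comm]
    exact mk_mul_dagSeries _ one_add_X_ne_zero

theorem coeff_C_mul_inv_robinsonDenom (n : ℕ) :
    coeff n (C ((1 + RatFunc.X) ^ n.choose 2) * robinsonDenom⁻¹) =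
      dagWeightFin (RatFunc.X : RatFunc ℚ) n / n.factorial := by
  rw [inv_robinsonDenom, coeff_C_mul, dagSeries, coeff_mk, mul_div_left_comm,
    div_mul_cancel_right₀ (pow_ne_zero _ one_add_X_ne_zero), div_eq_mul_inv]

end GeneratingFunction

theorem map_dagWeight {α R S : Type*} [CommSemiring R] [CommSemiring S] (φ : R →+* S) (x : R)
    (V : Finset α) : φ (dagWeight x V) = dagWeight (φ x) V := by
  simp [dagWeight]

theorem coeff_dagWeight_single {α F : Type*} [CommSemiring F] (V : Finset α) (m : ℕ) :
    (dagWeight (HahnSeries.single (1 : ℤ) (1 : F)) V).coeff (m : ℤ) =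
      #((dagsOn V).filter fun E => #E = m) := by
  simp [dagWeight, HahnSeries.single_pow, HahnSeries.coeff_single, sum_boole, eq_comm]

theorem coeff_coe_div_natCast {F : Type*} [Field F] (a : RatFunc F) (c : ℕ) (m : ℤ) :
    ((a / c : RatFunc F) : LaurentSeries F).coeff m = (a : LaurentSeries F).coeff m / c := by
  rw [map_div₀, map_natCast, div_eq_mul_inv, ← map_natCast HahnSeries.C, ← map_inv₀, mul_comm,
    HahnSeries.C_mul_eq_smul, HahnSeries.coeff_smul, smul_eq_mul, div_eq_inv_mul]

theorem dagCount_eq_card (n m : ℕ) :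
    dagCount n m = #((dagsOn (univ : Finset (Fin n))).filter fun E => #E = m) := by
  classical
  rw [dagCount, Nat.card_eq_fintype_card, Fintype.card_subtype]
  congr 1
  ext E
  simp only [mem_filter, mem_univ, true_and, mem_dagsOn, univ_product_univ, subset_univ]
  exact ⟨fun h => ⟨h.2.2, h.2.1⟩, fun h => ⟨fun _ => h.1.fst_ne_snd, h.2, h.1⟩⟩

theorem coeff_coe_dagWeightFin_X (n m : ℕ) :
    ((dagWeightFin (RatFunc.X : RatFunc ℚ) n : RatFunc ℚ) : LaurentSeries ℚ).coeff m =
      dagCount n m := by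
  rw [dagWeightFin, map_dagWeight, RatFunc.coe_X, coeff_dagWeight_single, dagCount_eq_card]

end Robinson

/-- Robinson's formula: `DAG_{n,m} = n!·[zⁿ wᵐ] (1+w)^{C(n,2)} / Σ_k (1+w)^{−C(k,2)}(−z)^k/k!`,
the inner coefficient (a rational function of `w`) being expanded as a formal Laurent series in `w`. -/
theorem robinson_formula (n m : ℕ) :
    (dagCount n m : ℚ) =
      (n.factorial : ℚ) *
        ((coeff (R := RatFunc ℚ) n
            (PowerSeries.C (R := RatFunc ℚ) ((1 + RatFunc.X) ^ (n.choose 2)) *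
              robinsonDenom⁻¹) : LaurentSeries ℚ).coeff m) := by
  open Robinson in
  rw [coeff_C_mul_inv_robinsonDenom, coeff_coe_div_natCast, coeff_coe_dagWeightFin_X,
    mul_div_cancel₀ _ (Nat.cast_ne_zero.2 n.factorial_ne_zero)]
end

section
/- Defining DAG^(z,w) = 1/(Σ_{n≥0} (1+w)^{−C(n,2)} (−z)ⁿ/n!) as a formal power series in z, the coefficient of zⁿ/n! in DAG^(z,w), multiplied by (1+w)^{C(n,2)}, is a polynomial in w with nonnegative integer coefficients (namely, the counting polynomial Σₘ DAG_{n,m} wᵐ of DAGs by edges). -/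
/-!
Let `A_n(w) = ∑_{E DAG on [n]} w^{#E}`. Every nonempty DAG has a source, so inclusion–exclusion
over a set `S` of vertices forced to be sources gives, for `n ≥ 1`,
`∑_k (-1)^k C(n,k) (1+w)^{k(n-k)} A_{n-k}(w) = 0`: a DAG in which all of `S` are sources is
an arbitrary set of edges from `S` to its complement together with a DAG on the complement.
Since `C(i+j,2) = C(i,2) + C(j,2) + ij`, this recurrence says exactly that
`∑ A_n(w) zⁿ/(n! (1+w)^{C(n,2)})` is the inverse of `∑ (-1)ⁿ zⁿ/(n! (1+w)^{C(n,2)})`.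
-/

open PowerSeries

/-- The graphic generating function of DAGs,
`DAG^(z,w) = 1/(Σ_{k≥0} (1+w)^{−C(k,2)} (−z)^k/k!)`. -/
noncomputable def dagGGF : PowerSeries (RatFunc ℚ) :=
  (PowerSeries.mk fun k =>
    (-1) ^ k * ((1 + RatFunc.X) ^ (k.choose 2))⁻¹ / (k.factorial : RatFunc ℚ))⁻¹

open Finset Relation

section Acyclic

variable {α β : Type*}

def EdgeSetAcyclic (E : Finset (α × α)) : Prop :=
  ∀ a, ¬ TransGen (fun a b => (a, b) ∈ E) a a

theorem EdgeSetAcyclic.mono {E E' : Finset (α × α)} (h : E' ⊆ E) (hE : EdgeSetAcyclic E) :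
    EdgeSetAcyclic E' :=
  fun a ha => hE a (TransGen.mono (fun _ _ hab => h hab) a a ha)

theorem EdgeSetAcyclic.fst_ne_snd {E : Finset (α × α)} (hE : EdgeSetAcyclic E) {e : α × α}
    (he : e ∈ E) : e.1 ≠ e.2 := by
  obtain ⟨a, b⟩ := e
  rintro (rfl : a = b)
  exact hE a (.single he)

theorem edgeSetAcyclic_map_iff (f : α ↪ β) {E : Finset (α × α)} :
    EdgeSetAcyclic (E.map (f.prodMap f)) ↔ EdgeSetAcyclic E := by
  have pullback : ∀ {x y}, TransGen (fun x y => (x, y) ∈ E.map (f.prodMap f)) x y →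
      ∃ a b, x = f a ∧ y = f b ∧ TransGen (fun a b => (a, b) ∈ E) a b := by
    intro x y h
    induction h with
    | single hxy =>
      obtain ⟨⟨a, b⟩, hab, heq⟩ := mem_map.1 hxy
      cases heq
      exact ⟨a, b, rfl, rfl, .single hab⟩
    | tail _ hyz ih =>
      obtain ⟨a, b, rfl, rfl, hab⟩ := ih
      obtain ⟨⟨b', c⟩, hbc, heq⟩ := mem_map.1 hyz
      obtain ⟨hb, rfl⟩ := Prod.mk.inj heq
      exact ⟨a, c, rfl, rfl, hab.tail (f.injective hb ▸ hbc)⟩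
  refine ⟨fun h a ha => h (f a)
      (TransGen.lift f (fun _ _ hab => mem_map_of_mem (f.prodMap f) hab) a a ha),
    fun h x hx => ?_⟩
  obtain ⟨a, b, rfl, hab, hcyc⟩ := pullback hx
  exact h a (f.injective hab ▸ hcyc)

variable [DecidableEq α]

/-- A cycle through `S` would have to enter `S`. -/
theorem edgeSetAcyclic_iff_filter_fst_notMem {E : Finset (α × α)} {S : Finset α}
    (hS : ∀ e ∈ E, e.2 ∉ S) :
    EdgeSetAcyclic E ↔ EdgeSetAcyclic (E.filter (·.1 ∉ S)) := by
  refine ⟨EdgeSetAcyclic.mono (filter_subset _ _), fun h a ha => ?_⟩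
  have restrict : ∀ {x y}, TransGen (fun a b => (a, b) ∈ E) x y → x ∉ S →
      TransGen (fun a b => (a, b) ∈ E.filter (·.1 ∉ S)) x y := by
    intro x y hxy
    induction hxy using TransGen.head_induction_on with
    | single hxy => exact fun hx => .single (mem_filter.2 ⟨hxy, hx⟩)
    | head hxz _ ih => exact fun hx => .head (mem_filter.2 ⟨hxz, hx⟩) (ih (hS _ hxz))
  obtain ⟨b, -, hba⟩ := TransGen.tail'_iff.1 ha
  exact h a (restrict ha (hS _ hba))

variable [Fintype α]

def sources (E : Finset (α × α)) : Finset α :=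
  univ.filter fun a => ∀ e ∈ E, e.2 ≠ a

theorem subset_sources_iff {E : Finset (α × α)} {S : Finset α} :
    S ⊆ sources E ↔ ∀ e ∈ E, e.2 ∉ S := by
  simp only [sources, subset_iff, mem_filter, mem_univ, true_and]
  exact ⟨fun h e he hS => h hS e he rfl, fun h a ha e he hea => h e he (hea ▸ ha)⟩

theorem EdgeSetAcyclic.sources_nonempty [Nonempty α] {E : Finset (α × α)}
    (hE : EdgeSetAcyclic E) : (sources E).Nonempty := by
  have : Std.Irrefl (TransGen fun a b => (a, b) ∈ E) := ⟨hE⟩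
  obtain ⟨a, -, hmin⟩ := (Finite.wellFounded_of_trans_of_irrefl
    (TransGen fun a b => (a, b) ∈ E)).has_min Set.univ
    ⟨Classical.arbitrary α, Set.mem_univ _⟩
  exact ⟨a, mem_filter.2 ⟨mem_univ _, fun e he hea =>
    hmin e.1 (Set.mem_univ _) (.single (by rw [← hea]; exact he))⟩⟩

end Acyclic

section DagPoly

variable {α β R : Type*} [CommSemiring R] (w : R)

open Classical in
noncomputable def acyclicEdgeSetsOn (T : Finset α) : Finset (Finset (α × α)) :=
  (T ×ˢ T).powerset.filter (EdgeSetAcyclic (α := α))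

theorem mem_acyclicEdgeSetsOn {T : Finset α} {E : Finset (α × α)} :
    E ∈ acyclicEdgeSetsOn T ↔ E ⊆ T ×ˢ T ∧ EdgeSetAcyclic E := by
  classical
  rw [acyclicEdgeSetsOn, mem_filter, mem_powerset]

noncomputable def dagPolyOn (T : Finset α) : R :=
  ∑ E ∈ acyclicEdgeSetsOn T, w ^ #E

noncomputable def dagPoly (n : ℕ) : R :=
  dagPolyOn w (univ : Finset (Fin n))

theorem dagPolyOn_map (f : α ↪ β) (T : Finset α) : dagPolyOn w (T.map f) = dagPolyOn w T := by
  have hmap : acyclicEdgeSetsOn (T.map f) =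
      (acyclicEdgeSetsOn T).map (mapEmbedding (f.prodMap f)).toEmbedding := by
    ext E'
    simp only [mem_acyclicEdgeSetsOn, ← prodMap_map_product, subset_map_iff, mem_map,
      RelEmbedding.coe_toEmbedding, mapEmbedding_apply]
    constructor
    · rintro ⟨⟨E, hE, rfl⟩, hacyc⟩
      exact ⟨E, ⟨hE, (edgeSetAcyclic_map_iff f).1 hacyc⟩, rfl⟩
    · rintro ⟨E, ⟨hE, hacyc⟩, rfl⟩
      exact ⟨⟨E, hE, rfl⟩, (edgeSetAcyclic_map_iff f).2 hacyc⟩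
  simp [dagPolyOn, hmap, sum_map]

theorem dagPolyOn_eq_dagPoly_card (T : Finset α) : dagPolyOn w T = dagPoly w #T := by
  calc dagPolyOn w T = dagPolyOn w ((univ : Finset T).map (.subtype (· ∈ T))) := by
        rw [univ_eq_attach, attach_map_val]
    _ = dagPolyOn w ((univ : Finset (Fin #T)).map T.equivFin.symm.toEmbedding) := by
        rw [dagPolyOn_map, map_univ_equiv]
    _ = dagPoly w #T := dagPolyOn_map _ _ _

theorem dagPoly_zero : dagPoly w 0 = 1 := by
  have : acyclicEdgeSetsOn (univ : Finset (Fin 0)) = {∅} := by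
    ext E
    rw [mem_acyclicEdgeSetsOn, mem_singleton]
    exact ⟨fun _ => eq_empty_of_isEmpty E, fun h => ⟨by simp [h], fun a => a.elim0⟩⟩
  rw [dagPoly, dagPolyOn, this, sum_singleton, card_empty, pow_zero]

end DagPoly

section Recurrence

variable {α R : Type*} [Fintype α] [DecidableEq α]

theorem sum_acyclicEdgeSets_filter_subset_sources [CommSemiring R] (w : R) (S : Finset α) :
    ∑ E ∈ (acyclicEdgeSetsOn univ).filter (S ⊆ sources ·), w ^ #E =
      (1 + w) ^ (#S * #Sᶜ) * dagPolyOn w Sᶜ := by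
  have hpow : (1 + w) ^ (#S * #Sᶜ) = ∑ F ∈ (S ×ˢ Sᶜ).powerset, w ^ #F := by
    simpa [add_comm, card_product] using (sum_pow_mul_eq_add_pow w 1 (S ×ˢ Sᶜ)).symm
  have filter_union : ∀ {F H : Finset (α × α)}, F ⊆ S ×ˢ Sᶜ → H ⊆ Sᶜ ×ˢ Sᶜ →
      (F ∪ H).filter (·.1 ∈ S) = F ∧ (F ∪ H).filter (·.1 ∉ S) = H := by
    intro F H hF hH
    constructor <;> ext e <;> grind [mem_compl]
  rw [hpow, dagPolyOn, sum_mul_sum, ← sum_product']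
  refine sum_nbij' (fun E => (E.filter (·.1 ∈ S), E.filter (·.1 ∉ S))) (fun p => p.1 ∪ p.2)
    ?_ ?_ (fun E _ => filter_union_filter_not_eq _ E) ?_ ?_
  · intro E hE
    simp only [mem_filter, mem_acyclicEdgeSetsOn, subset_sources_iff] at hE
    obtain ⟨⟨-, hacyc⟩, hS⟩ := hE
    refine mem_product.2 ⟨mem_powerset.2 ?_, mem_acyclicEdgeSetsOn.2 ⟨?_,
      (edgeSetAcyclic_iff_filter_fst_notMem hS).1 hacyc⟩⟩ <;>
    · intro e he
      grind [mem_compl]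
  · rintro ⟨F, H⟩ hp
    simp only [mem_product, mem_powerset, mem_acyclicEdgeSetsOn] at hp
    obtain ⟨hF, hH, hacyc⟩ := hp
    have hS : ∀ e ∈ F ∪ H, e.2 ∉ S := by grind [mem_compl]
    refine mem_filter.2 ⟨mem_acyclicEdgeSetsOn.2 ⟨by simp, ?_⟩, subset_sources_iff.2 hS⟩
    rwa [edgeSetAcyclic_iff_filter_fst_notMem hS, (filter_union hF hH).2]
  · rintro ⟨F, H⟩ hp
    simp only [mem_product, mem_powerset, mem_acyclicEdgeSetsOn] at hp
    exact Prod.ext_iff.2 (filter_union hp.1 hp.2.1)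
  · intro E _
    rw [← pow_add, card_filter_add_card_filter_not]

/-- Grouped by the DAG `E`, the sum weights `w ^ #E` by `∑_{S ⊆ sources E} (-1)^#S`, which
vanishes because an acyclic digraph on a nonempty vertex set has a source. -/
theorem sum_powerset_neg_one_pow_mul_dagPolyOn_compl [CommRing R] [Nonempty α] (w : R) :
    ∑ S ∈ (univ : Finset α).powerset,
      (-1 : R) ^ #S * ((1 + w) ^ (#S * #Sᶜ) * dagPolyOn w Sᶜ) = 0 := by
  simp_rw [← sum_acyclicEdgeSets_filter_subset_sources, mul_sum]
  rw [sum_comm' (t' := acyclicEdgeSetsOn univ) (s' := fun E => (sources E).powerset)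
    (fun S E => by simp [mem_filter, and_comm])]
  refine sum_eq_zero fun E hE => ?_
  have hsum := congrArg (Int.cast (R := R)) (sum_powerset_neg_one_pow_card_of_nonempty
    (mem_acyclicEdgeSetsOn.1 hE).2.sources_nonempty)
  push_cast at hsum
  rw [← sum_mul, hsum, zero_mul]

theorem sum_antidiagonal_choose_mul_dagPoly [CommRing R] (w : R) {n : ℕ} (hn : 0 < n) :
    ∑ p ∈ antidiagonal n, (n.choose p.1 : R) * (1 + w) ^ (p.1 * p.2) * (-1) ^ p.1 *
      dagPoly w p.2 = 0 := by
  have : Nonempty (Fin n) := Fin.pos_iff_nonempty.1 hn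
  have h := sum_powerset_neg_one_pow_mul_dagPolyOn_compl (α := Fin n) w
  simp only [dagPolyOn_eq_dagPoly_card, card_compl, Fintype.card_fin] at h
  rw [sum_powerset_apply_card (fun k => (-1 : R) ^ k * ((1 + w) ^ (k * (n - k)) *
    dagPoly w (n - k))), card_univ, Fintype.card_fin] at h
  rw [Nat.sum_antidiagonal_eq_sum_range_succ_mk, ← h]
  refine sum_congr rfl fun k _ => ?_
  rw [nsmul_eq_mul]
  ring

end Recurrence

theorem dagPoly_eq_sum_dagCount {R : Type*} [CommSemiring R] (w : R) (n : ℕ) :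
    dagPoly w n = ∑ m ∈ range (n * (n - 1) + 1), (dagCount n m : R) * w ^ m := by
  have hcard : ∀ E ∈ acyclicEdgeSetsOn (univ : Finset (Fin n)),
      #E ∈ range (n * (n - 1) + 1) := by
    intro E hE
    have hsub : E ⊆ univ.offDiag := fun e he =>
      mem_offDiag.2 ⟨mem_univ _, mem_univ _, (mem_acyclicEdgeSetsOn.1 hE).2.fst_ne_snd he⟩
    have := card_le_card hsub
    rw [offDiag_card, card_univ, Fintype.card_fin, ← Nat.mul_sub_one] at this
    exact mem_range_succ_iff.2 this
  rw [dagPoly, dagPolyOn, ← sum_fiberwise_of_maps_to hcard]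
  refine sum_congr rfl fun m _ => ?_
  have hcount :
      dagCount n m = #((acyclicEdgeSetsOn (univ : Finset (Fin n))).filter (#· = m)) := by
    classical
    rw [dagCount, Nat.card_eq_fintype_card, Fintype.card_subtype]
    congr 1
    ext E
    simp only [mem_filter, mem_univ, true_and, mem_acyclicEdgeSetsOn, univ_product_univ,
      subset_univ]
    exact ⟨fun ⟨_, hm, hE⟩ => ⟨hE, hm⟩,
      fun ⟨hE, hm⟩ => ⟨fun _ => hE.fst_ne_snd, hm, hE⟩⟩
  rw [hcount, sum_congr rfl fun E hE => by rw [(mem_filter.1 hE).2], sum_const, nsmul_eq_mul]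

theorem Nat.choose_two_add (i j : ℕ) : (i + j).choose 2 = i.choose 2 + j.choose 2 + i * j := by
  apply Nat.cast_injective (R := ℚ)
  push_cast [Nat.cast_choose_two]
  ring

section GraphicSeries

variable {K : Type*} [Field K]

noncomputable def graphicSeries (u : K) (a : ℕ → K) : K⟦X⟧ :=
  mk fun k => a k * (u ^ k.choose 2)⁻¹ / k.factorial

variable [CharZero K] {u : K}

theorem coeff_graphicSeries_mul (hu : u ≠ 0) (a b : ℕ → K) (n : ℕ) :
    coeff n (graphicSeries u a * graphicSeries u b) =
      (∑ p ∈ antidiagonal n, n.choose p.1 * u ^ (p.1 * p.2) * a p.1 * b p.2) *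
        (u ^ n.choose 2)⁻¹ / n.factorial := by
  rw [coeff_mul, sum_mul, sum_div]
  refine sum_congr rfl fun ⟨i, j⟩ hij => ?_
  rw [HasAntidiagonal.mem_antidiagonal] at hij
  subst hij
  simp only [graphicSeries, coeff_mk, Nat.choose_two_add, pow_add]
  rw [Nat.choose_symm_add, ← Nat.add_choose_mul_factorial_mul_factorial i j]
  have : ((i + j).choose j : K) ≠ 0 := Nat.cast_ne_zero.2 (Nat.choose_pos (by omega)).ne'
  push_cast
  field_simp

theorem graphicSeries_neg_one_pow_inv (hu : u ≠ 0) {a : ℕ → K} (h0 : a 0 = 1)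
    (h : ∀ n, 0 < n →
      ∑ p ∈ antidiagonal n, n.choose p.1 * u ^ (p.1 * p.2) * (-1) ^ p.1 * a p.2 = 0) :
    (graphicSeries u fun k => (-1) ^ k)⁻¹ = graphicSeries u a := by
  rw [PowerSeries.inv_eq_iff_mul_eq_one (by simp [graphicSeries]), mul_comm]
  ext n
  rw [coeff_graphicSeries_mul hu, coeff_one]
  rcases Nat.eq_zero_or_pos n with rfl | hn
  · simp [h0]
  · rw [h n hn, if_neg hn.ne']
    simp

end GraphicSeries

theorem one_add_X_ne_zero : (1 + RatFunc.X : RatFunc ℚ) ≠ 0 := by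
  rw [← RatFunc.algebraMap_X, ← map_one (algebraMap (Polynomial ℚ) (RatFunc ℚ)),
    ← map_add]
  exact RatFunc.algebraMap_ne_zero (by simpa [add_comm] using Polynomial.X_add_C_ne_zero (1 : ℚ))

theorem dagGGF_eq_graphicSeries : dagGGF = graphicSeries (1 + RatFunc.X) (dagPoly RatFunc.X) :=
  graphicSeries_neg_one_pow_inv one_add_X_ne_zero (dagPoly_zero _) fun n hn => by
    simpa [mul_right_comm] using sum_antidiagonal_choose_mul_dagPoly RatFunc.X hn

/-- the coefficient of `zⁿ/n!` in `DAG^(z,w)`, multiplied by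
`(1+w)^{C(n,2)}`, is the counting polynomial `Σₘ DAG_{n,m} wᵐ`, a polynomial in `w`
with nonnegative integer coefficients. -/
theorem dagGGF_coeff (n : ℕ) :
    (n.factorial : RatFunc ℚ) * coeff n dagGGF *
        (1 + RatFunc.X) ^ (n.choose 2) =
      ∑ m ∈ Finset.range (n * (n - 1) + 1), (dagCount n m : RatFunc ℚ) * RatFunc.X ^ m := by
  rw [← dagPoly_eq_sum_dagCount, dagGGF_eq_graphicSeries, graphicSeries, coeff_mk]
  have := pow_ne_zero (n.choose 2) one_add_X_ne_zero
  have : (n.factorial : RatFunc ℚ) ≠ 0 := Nat.cast_ne_zero.2 n.factorial_ne_zero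
  field_simp
end

section
/- For the EGF T(z) of rooted labeled trees satisfying T(z) = z·e^{T(z)}, the Puiseux expansion at z = 1/e has leading terms T(z) = 1 − √2·√(1−ez) + (2/3)(1−ez) + O((1−ez)^{3/2}). -/
/-!
Put `E(z) = T(z)/z = Σ (n+1)^(n-1) zⁿ/n!`. Abel's identity
`Σₖ C(n,k) (k+1)^(k-1) (S-k-1)^(n-k) = Sⁿ`, taken at `S = n+2`, is the coefficientwise form
of `E' = E·T'`, so `E·e^(-T)` is constant and `T(z) e^(-T(z)) = z` for `|z| < 1/e`.

On `[0, 1/e)` the value `T(z)` stays below `1`, since `T = 1` would force `z = 1/e`; as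
`w e^(-w)` increases on `[0, 1]`, `T(z) → 1` when `z → 1/e⁻`. With `u = 1 - T` the functional
equation reads `1 - ez = 1 - (1-u)eᵘ = u²/2 + u³/3 + O(u⁴)`, hence
`√2·√(1-ez) = u + u²/3 + O(u³)`, which rearranges to the claimed expansion.
-/

open Real Filter Asymptotics

/-- The tree function `T(z) = Σ_{n≥1} n^{n-1} zⁿ/n!` as a real function. -/
noncomputable def treeFn (z : ℝ) : ℝ :=
  ∑' n : ℕ, (if n = 0 then 0 else (n : ℝ) ^ (n - 1) / (n.factorial : ℝ)) * z ^ n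

open Finset
open scoped Nat

variable {z : ℝ}

lemma sum_neg_one_pow_mul_choose_mul_pow_eq_zero {R : Type*} [CommRing R] {j m : ℕ} (h : j < m)
    (y : R) : ∑ k ∈ range (m + 1), (-1) ^ (m - k) * (m.choose k : R) * (y + k) ^ j = 0 := by
  have := congr_fun (fwdDiff_iter_pow_eq_zero_of_lt (R := R) h) y
  rw [fwdDiff_iter_eq_sum_shift] at this
  simpa [zsmul_eq_mul] using this

lemma choose_mul_choose_sub_comm (n j k : ℕ) :
    n.choose k * (n - k).choose j = n.choose j * (n - j).choose k := by
  have hk := Nat.choose_mul (n := n) (k := j + k) (s := k) (Nat.le_add_left k j)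
  have hj := Nat.choose_mul (n := n) (k := j + k) (s := j) (Nat.le_add_right j k)
  rw [Nat.add_sub_cancel] at hk
  rw [Nat.add_sub_cancel_left] at hj
  rw [← hk, ← hj, Nat.choose_symm_add]

lemma add_one_pow_pred_mul_add_one_pow_sub {R : Type*} [Semiring R] {k m : ℕ} (h : k ≤ m) :
    ((k : R) + 1) ^ (k - 1) * ((k : R) + 1) ^ (m - k) = ((k : R) + 1) ^ (m - 1) := by
  rcases Nat.eq_zero_or_pos k with rfl | hk
  · simp
  · rw [← pow_add]
    congr 1
    omega

/-- Abel's identity. At `k = 0` the truncated exponent `k - 1 = 0` still gives the right factor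
`1 = 1⁻¹`. -/
theorem abel_identity {R : Type*} [CommRing R] (S : R) (n : ℕ) :
    ∑ k ∈ range (n + 1), (n.choose k : R) * ((k : R) + 1) ^ (k - 1) * (S - (k + 1)) ^ (n - k)
      = S ^ n := by
  -- expand `(S - (k+1))^(n-k)` in powers of `S`; the coefficient of `Sʲ` is an `(n-j)`-th
  -- finite difference of a polynomial of degree `n-j-1`
  set F : ℕ → ℕ → R := fun k j => (n.choose k : R) * ((k : R) + 1) ^ (k - 1) *
    ((-1) ^ (j + (n - k)) * S ^ j * ((k : R) + 1) ^ (n - k - j) * ((n - k).choose j : R))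
  have coeff : ∀ j ∈ range (n + 1),
      ∑ k ∈ range (n - j + 1), F k j = if j = n then S ^ n else 0 := by
    intro j hj
    have hjn : j ≤ n := Nat.lt_succ_iff.mp (mem_range.mp hj)
    have hF : ∀ k ∈ range (n - j + 1), F k j = (n.choose j : R) * S ^ j *
        ((-1) ^ (n - j - k) * ((n - j).choose k : R) * (1 + k) ^ (n - j - 1)) := by
      intro k hk
      have hkj : k ≤ n - j := Nat.lt_succ_iff.mp (mem_range.mp hk)
      have hchoose : (n.choose k : R) * ((n - k).choose j : R)
          = (n.choose j : R) * ((n - j).choose k : R) := by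
        rw [← Nat.cast_mul, ← Nat.cast_mul, choose_mul_choose_sub_comm]
      have hsign : (-1 : R) ^ (j + (n - k)) = (-1) ^ (n - j - k) := by
        rw [show j + (n - k) = 2 * j + (n - j - k) by omega, pow_add, pow_mul]
        simp
      have hpow := add_one_pow_pred_mul_add_one_pow_sub (R := R) hkj
      simp only [F, hsign, show n - k - j = n - j - k by omega]
      linear_combination (S ^ j * (-1) ^ (n - j - k) * ((k : R) + 1) ^ (k - 1) *
        ((k : R) + 1) ^ (n - j - k)) * hchoose + ((n.choose j : R) * S ^ j * (-1) ^ (n - j - k) *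
        ((n - j).choose k : R)) * hpow
    rw [sum_congr rfl hF, ← mul_sum]
    split_ifs with h
    · subst h
      simp
    · rw [sum_neg_one_pow_mul_choose_mul_pow_eq_zero (by omega), mul_zero]
  calc _ = ∑ k ∈ range (n + 1), ∑ j ∈ range (n - k + 1), F k j :=
        sum_congr rfl fun k _ => by rw [sub_pow, mul_sum]
    _ = ∑ j ∈ range (n + 1), ∑ k ∈ range (n - j + 1), F k j :=
        sum_comm' fun k j => by simp only [mem_range]; omega
    _ = S ^ n := by
        rw [sum_congr rfl coeff, sum_ite_eq' (range (n + 1)), if_pos (self_mem_range_succ n)]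

section PowerSeries

variable {a : ℕ → ℝ} {K R : ℝ}

lemma summable_norm_mul_pow_of_abs_le (hR : 0 < R) (ha : ∀ n, |a n| ≤ K * R ^ n)
    (hz : |z| < R⁻¹) : Summable fun n => ‖a n * z ^ n‖ := by
  have hRz : R * |z| < 1 := by
    simpa [mul_inv_cancel₀ hR.ne'] using mul_lt_mul_of_pos_left hz hR
  refine ((summable_geometric_of_lt_one (by positivity) hRz).mul_left K).of_nonneg_of_le
    (fun n => norm_nonneg _) fun n => ?_
  rw [norm_mul, norm_pow, Real.norm_eq_abs, Real.norm_eq_abs, mul_pow, ← mul_assoc]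
  exact mul_le_mul_of_nonneg_right (ha n) (by positivity)

lemma hasDerivAt_tsum_mul_pow (hR : 0 < R) (ha : ∀ n, |a n| ≤ K * R ^ n) (hz : |z| < R⁻¹) :
    HasDerivAt (fun w => ∑' n, a n * w ^ n) (∑' n, (n + 1) * a (n + 1) * z ^ n) z := by
  obtain ⟨r, hzr, hrR⟩ := exists_between hz
  have hr : 0 < r := (abs_nonneg z).trans_lt hzr
  have hRr : ‖R * r‖ < 1 := by
    rw [Real.norm_of_nonneg (by positivity)]
    simpa [mul_inv_cancel₀ hR.ne'] using mul_lt_mul_of_pos_left hrR hR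
  have hK : 0 ≤ K := by simpa using (abs_nonneg (a 0)).trans (ha 0)
  have hu : Summable fun n : ℕ => K / r * ((n : ℝ) ^ 1 * (R * r) ^ n) :=
    (summable_pow_mul_geometric_of_norm_lt_one 1 hRr).mul_left _
  have hbound : ∀ (n : ℕ) w, w ∈ Metric.ball (0 : ℝ) r →
      ‖a n * (n * w ^ (n - 1))‖ ≤ K / r * ((n : ℝ) ^ 1 * (R * r) ^ n) := by
    intro n w hw
    rw [mem_ball_zero_iff, Real.norm_eq_abs] at hw
    rcases n with _ | m
    · simp
    calc ‖a (m + 1) * ((m + 1 : ℕ) * w ^ (m + 1 - 1))‖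
          = |a (m + 1)| * ((m + 1 : ℕ) * |w| ^ m) := by
          rw [Real.norm_eq_abs, abs_mul, abs_mul, abs_pow, Nat.abs_cast, Nat.add_sub_cancel]
      _ ≤ K * R ^ (m + 1) * ((m + 1 : ℕ) * r ^ m) := by gcongr; exact ha _
      _ = K / r * (((m + 1 : ℕ) : ℝ) ^ 1 * (R * r) ^ (m + 1)) := by
          field_simp
          ring
  have hz' : z ∈ Metric.ball (0 : ℝ) r := by rwa [mem_ball_zero_iff, Real.norm_eq_abs]
  have hderiv := hasDerivAt_tsum_of_isPreconnected hu Metric.isOpen_ball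
    (convex_ball 0 r).isPreconnected (fun n w _ => (hasDerivAt_pow n w).const_mul (a n))
    hbound hz' (summable_norm_mul_pow_of_abs_le hR ha hz).of_norm hz'
  have hshift :
      ∑' n : ℕ, a n * (n * z ^ (n - 1)) = ∑' n : ℕ, (n + 1) * a (n + 1) * z ^ n := by
    rw [(hu.of_norm_bounded (hbound · z hz')).tsum_eq_zero_add]
    simp only [Nat.cast_zero, zero_mul, mul_zero, zero_add, Nat.add_sub_cancel, Nat.cast_succ]
    exact tsum_congr fun n => by ring
  exact hshift ▸ hderiv

lemma tsum_mul_zero_pow (a : ℕ → ℝ) : ∑' n, a n * 0 ^ n = a 0 := by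
  rw [tsum_eq_single 0 fun n hn => by simp [hn]]
  simp

end PowerSeries

noncomputable def treeCoeff (n : ℕ) : ℝ := if n = 0 then 0 else (n : ℝ) ^ (n - 1) / n !

lemma treeFn_eq_tsum (z : ℝ) : treeFn z = ∑' n, treeCoeff n * z ^ n := rfl

lemma treeCoeff_nonneg (n : ℕ) : 0 ≤ treeCoeff n := by
  unfold treeCoeff
  split_ifs <;> positivity

lemma treeCoeff_succ (n : ℕ) : treeCoeff (n + 1) = ((n : ℝ) + 1) ^ (n - 1) / n ! := by
  rcases n with _ | m
  · simp [treeCoeff]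
  · simp only [treeCoeff, Nat.add_eq_zero_iff, one_ne_zero, and_false, if_false,
      Nat.add_sub_cancel, Nat.factorial_succ (m + 1)]
    push_cast
    rw [pow_succ]
    field_simp

lemma succ_mul_treeCoeff_succ (n : ℕ) :
    ((n : ℝ) + 1) * treeCoeff (n + 1) = ((n : ℝ) + 1) ^ n / n ! := by
  rw [treeCoeff_succ]
  rcases n with _ | m
  · simp
  · rw [Nat.add_sub_cancel, pow_succ]
    ring

lemma succ_mul_treeCoeff_succ_le (n : ℕ) :
    ((n : ℝ) + 1) * treeCoeff (n + 1) ≤ exp 1 ^ (n + 1) := by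
  have h := pow_div_factorial_le_exp (x := ((n + 1 : ℕ) : ℝ)) (by positivity) (n + 1)
  rw [exp_one_pow, succ_mul_treeCoeff_succ]
  rw [Nat.factorial_succ] at h
  push_cast at h ⊢
  calc ((n : ℝ) + 1) ^ n / n ! = ((n : ℝ) + 1) ^ (n + 1) / ((n + 1) * n !) := by
        field_simp
        ring
    _ ≤ _ := h

lemma abs_treeCoeff_le (n : ℕ) : |treeCoeff n| ≤ exp 1 ^ n := by
  rw [abs_of_nonneg (treeCoeff_nonneg n)]
  rcases n with _ | m
  · simp [treeCoeff]
  · refine le_trans ?_ (succ_mul_treeCoeff_succ_le m)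
    have := treeCoeff_nonneg (m + 1)
    nlinarith [(m.cast_nonneg : (0 : ℝ) ≤ m)]

lemma abs_succ_mul_treeCoeff_succ_le (n : ℕ) :
    |((n : ℝ) + 1) * treeCoeff (n + 1)| ≤ exp 1 * exp 1 ^ n := by
  rw [abs_of_nonneg (by have := treeCoeff_nonneg (n + 1); positivity)]
  exact (succ_mul_treeCoeff_succ_le n).trans_eq (pow_succ' _ _)

lemma sum_treeCoeff_mul_succ_mul_treeCoeff (n : ℕ) :
    ∑ k ∈ range (n + 1),
        treeCoeff (k + 1) * ((((n - k : ℕ) : ℝ) + 1) * treeCoeff (n - k + 1))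
      = ((n : ℝ) + 1) * treeCoeff (n + 1 + 1) := by
  have hterm : ∀ k ∈ range (n + 1),
      treeCoeff (k + 1) * ((((n - k : ℕ) : ℝ) + 1) * treeCoeff (n - k + 1))
        = (n.choose k : ℝ) * ((k : ℝ) + 1) ^ (k - 1) * ((n + 2 : ℝ) - (k + 1)) ^ (n - k)
          / n ! := by
    intro k hk
    have hkn : k ≤ n := Nat.lt_succ_iff.mp (mem_range.mp hk)
    rw [treeCoeff_succ, succ_mul_treeCoeff_succ, Nat.cast_choose ℝ hkn, Nat.cast_sub hkn]
    field_simp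
    ring
  rw [sum_congr rfl hterm, ← sum_div, abel_identity, treeCoeff_succ, Nat.factorial_succ]
  push_cast
  field_simp
  ring

/-- `T(z) / z`, which turns out to be `exp (T z)`. -/
noncomputable def expTreeFn (z : ℝ) : ℝ := ∑' n, treeCoeff (n + 1) * z ^ n

noncomputable def treeFnDeriv (z : ℝ) : ℝ :=
  ∑' n : ℕ, ((n : ℝ) + 1) * treeCoeff (n + 1) * z ^ n

noncomputable def expTreeFnDeriv (z : ℝ) : ℝ :=
  ∑' n : ℕ, ((n : ℝ) + 1) * treeCoeff (n + 1 + 1) * z ^ n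

lemma hasDerivAt_treeFn (hz : |z| < (exp 1)⁻¹) : HasDerivAt treeFn (treeFnDeriv z) z :=
  hasDerivAt_tsum_mul_pow (exp_pos 1) (fun n => (abs_treeCoeff_le n).trans_eq (one_mul _).symm) hz

lemma hasDerivAt_expTreeFn (hz : |z| < (exp 1)⁻¹) : HasDerivAt expTreeFn (expTreeFnDeriv z) z :=
  hasDerivAt_tsum_mul_pow (exp_pos 1)
    (fun n => (abs_treeCoeff_le (n + 1)).trans_eq (pow_succ' _ _)) hz

lemma expTreeFn_mul_treeFnDeriv (hz : |z| < (exp 1)⁻¹) :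
    expTreeFn z * treeFnDeriv z = expTreeFnDeriv z := by
  rw [expTreeFn, treeFnDeriv, tsum_mul_tsum_eq_tsum_sum_range_of_summable_norm
    (summable_norm_mul_pow_of_abs_le (exp_pos 1)
      (fun n => (abs_treeCoeff_le (n + 1)).trans_eq (pow_succ' _ _)) hz)
    (summable_norm_mul_pow_of_abs_le (exp_pos 1) abs_succ_mul_treeCoeff_succ_le hz)]
  refine tsum_congr fun n => ?_
  rw [← sum_treeCoeff_mul_succ_mul_treeCoeff, sum_mul]
  refine sum_congr rfl fun k hk => ?_
  rw [← pow_mul_pow_sub z (Nat.lt_succ_iff.mp (mem_range.mp hk))]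
  ring

lemma treeFn_zero : treeFn 0 = 0 := by
  rw [treeFn_eq_tsum, tsum_mul_zero_pow]
  simp [treeCoeff]

lemma expTreeFn_zero : expTreeFn 0 = 1 := by
  simp [expTreeFn, tsum_mul_zero_pow, treeCoeff]

lemma treeFn_eq_mul_expTreeFn (hz : |z| < (exp 1)⁻¹) : treeFn z = z * expTreeFn z := by
  rw [treeFn_eq_tsum, (summable_norm_mul_pow_of_abs_le (exp_pos 1)
    (fun n => (abs_treeCoeff_le n).trans_eq (one_mul _).symm) hz).of_norm.tsum_eq_zero_add,
    expTreeFn, ← tsum_mul_left, show treeCoeff 0 = 0 from if_pos rfl, zero_mul, zero_add]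
  exact tsum_congr fun n => by ring

lemma expTreeFn_eq_exp_treeFn (hz : |z| < (exp 1)⁻¹) : expTreeFn z = exp (treeFn z) := by
  have hball : ∀ {w : ℝ}, w ∈ Metric.ball (0 : ℝ) (exp 1)⁻¹ ↔ |w| < (exp 1)⁻¹ := by
    simp
  have hderiv : ∀ w ∈ Metric.ball (0 : ℝ) (exp 1)⁻¹,
      HasDerivAt (fun w => expTreeFn w * exp (-treeFn w)) 0 w := by
    intro w hw
    have h := (hasDerivAt_expTreeFn (hball.mp hw)).mul (hasDerivAt_treeFn (hball.mp hw)).neg.exp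
    rw [← expTreeFn_mul_treeFnDeriv (hball.mp hw)] at h
    exact h.congr_deriv (by ring)
  have hconst := Metric.isOpen_ball.is_const_of_deriv_eq_zero (convex_ball _ _).isPreconnected
    (fun w hw => (hderiv w hw).differentiableAt.differentiableWithinAt)
    (fun w hw => (hderiv w hw).deriv) (hball.mpr hz) (Metric.mem_ball_self (by positivity))
  rwa [treeFn_zero, expTreeFn_zero, neg_zero, exp_zero, mul_one, exp_neg, ← div_eq_mul_inv,
    div_eq_one_iff_eq (exp_pos _).ne'] at hconst

theorem treeFn_mul_exp_neg_treeFn (hz : |z| < (exp 1)⁻¹) : treeFn z * exp (-treeFn z) = z :=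
  calc treeFn z * exp (-treeFn z) = z * (exp (treeFn z) * exp (-treeFn z)) := by
        rw [← expTreeFn_eq_exp_treeFn hz, ← mul_assoc, ← treeFn_eq_mul_expTreeFn hz]
    _ = z := by rw [← exp_add, add_neg_cancel, exp_zero, mul_one]

lemma treeFn_mul_exp_one_sub_treeFn (hz : |z| < (exp 1)⁻¹) :
    treeFn z * exp (1 - treeFn z) = exp 1 * z := by
  conv_rhs => rw [← treeFn_mul_exp_neg_treeFn hz]
  rw [sub_eq_add_neg, exp_add]
  ring

lemma treeFn_nonneg (hz : 0 ≤ z) : 0 ≤ treeFn z :=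
  tsum_nonneg fun n => mul_nonneg (treeCoeff_nonneg n) (pow_nonneg hz n)

lemma abs_lt_of_mem_Icc_zero {w c : ℝ} (hw : w ∈ Set.Icc 0 z) (hz : z < c) : |w| < c := by
  rw [abs_of_nonneg hw.1]
  exact hw.2.trans_lt hz

lemma treeFn_lt_one (hz₀ : 0 ≤ z) (hz : z < (exp 1)⁻¹) : treeFn z < 1 := by
  by_contra! h
  have hcont : ContinuousOn treeFn (Set.Icc 0 z) := fun w hw =>
    (hasDerivAt_treeFn (abs_lt_of_mem_Icc_zero hw hz)).continuousAt.continuousWithinAt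
  obtain ⟨c, hc, hTc⟩ :=
    intermediate_value_Icc hz₀ hcont ⟨treeFn_zero.trans_le zero_le_one, h⟩
  have hfix := treeFn_mul_exp_neg_treeFn (abs_lt_of_mem_Icc_zero hc hz)
  rw [hTc, one_mul, exp_neg] at hfix
  linarith [hc.2]

lemma strictMonoOn_mul_exp_neg : StrictMonoOn (fun w => w * exp (-w)) (Set.Icc 0 1) := by
  have hderiv : ∀ x, HasDerivAt (fun w => w * exp (-w)) ((1 - x) * exp (-x)) x := fun x =>
    ((hasDerivAt_id' x).mul (hasDerivAt_neg x).exp).congr_deriv (by ring)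
  refine strictMonoOn_of_deriv_pos (convex_Icc 0 1)
    (fun x _ => (hderiv x).continuousAt.continuousWithinAt) fun x hx => ?_
  rw [interior_Icc] at hx
  rw [(hderiv x).deriv]
  exact mul_pos (by linarith [hx.2]) (exp_pos _)

lemma half_lt_treeFn (hz₀ : exp (-(1 / 2)) / 2 < z) (hz : z < (exp 1)⁻¹) :
    1 / 2 < treeFn z := by
  have hz₀' : 0 ≤ z := by linarith [exp_pos (-(1 / 2))]
  have hfix := treeFn_mul_exp_neg_treeFn
    (abs_lt_of_mem_Icc_zero ⟨hz₀', le_rfl⟩ hz)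
  refine (strictMonoOn_mul_exp_neg.lt_iff_lt ⟨by norm_num, by norm_num⟩
    ⟨treeFn_nonneg hz₀', (treeFn_lt_one hz₀' hz).le⟩).mp ?_
  rw [hfix]
  linarith

lemma exp_neg_half_div_two_lt_inv_exp_one : exp (-(1 / 2)) / 2 < (exp 1)⁻¹ := by
  have hsq : exp (1 / 2) * exp (1 / 2) = exp 1 := by rw [← exp_add]; norm_num
  have h : exp (1 / 2) < 2 := by nlinarith [exp_pos (1 / 2), exp_one_lt_d9]
  rw [← exp_neg, div_lt_iff₀ two_pos]
  calc exp (-(1 / 2)) = exp (-1) * exp (1 / 2) := by rw [← exp_add]; norm_num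
    _ < exp (-1) * 2 := mul_lt_mul_of_pos_left h (exp_pos _)

lemma one_sub_one_sub_mul_exp_mem_Icc {u : ℝ} (hu₀ : 0 ≤ u) (hu₁ : u ≤ 1) :
    1 - (1 - u) * exp u ∈
      Set.Icc (u ^ 2 / 2 + u ^ 3 / 3) (u ^ 2 / 2 + u ^ 3 / 3 + u ^ 4 / 4) := by
  have h := Real.exp_bound (x := u) (by rwa [abs_of_nonneg hu₀]) (n := 4) (by norm_num)
  simp only [sum_range_succ, sum_range_zero, abs_of_nonneg hu₀, Nat.factorial] at h
  norm_num at h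
  obtain ⟨hlo, hhi⟩ := abs_le.mp h
  have h1u : 0 ≤ 1 - u := by linarith
  constructor <;> nlinarith [mul_le_mul_of_nonneg_left hlo h1u, mul_le_mul_of_nonneg_left hhi h1u]

lemma abs_sqrt_two_mul_sub_le {u s : ℝ} (hu₀ : 0 ≤ u) (hu : u ≤ 1 / 2) (hs : 0 ≤ s)
    (hs2 : s ^ 2 ∈ Set.Icc (u ^ 2 / 2 + u ^ 3 / 3) (u ^ 2 / 2 + u ^ 3 / 3 + u ^ 4 / 4)) :
    |√2 * s - (u + u ^ 2 / 3)| ≤ u ^ 3 := by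
  have h2s : √2 * s = √(2 * s ^ 2) := by
    rw [Real.sqrt_mul zero_le_two, Real.sqrt_sq hs]
  have hlo : u + u ^ 2 / 3 - u ^ 3 ≤ √2 * s := by
    rw [h2s]
    refine Real.le_sqrt_of_sq_le ?_
    nlinarith [hs2.1, pow_nonneg hu₀ 4, pow_nonneg hu₀ 5]
  have hhi : √2 * s ≤ u + u ^ 2 / 3 + u ^ 3 := by
    rw [h2s]
    refine Real.sqrt_le_iff.mpr ⟨by positivity, ?_⟩
    nlinarith [hs2.2, pow_nonneg hu₀ 4, pow_nonneg hu₀ 5, pow_nonneg hu₀ 6]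
  rw [abs_le]
  constructor <;> linarith

lemma abs_sub_puiseux_le {T s : ℝ} (hT : 1 / 2 ≤ T) (hT₁ : T ≤ 1) (hs : 0 ≤ s)
    (hs2 : s ^ 2 = 1 - T * exp (1 - T)) : |T - (1 - √2 * s + 2 / 3 * s ^ 2)| ≤ 16 * s ^ 3 := by
  obtain ⟨u, rfl⟩ : ∃ u, T = 1 - u := ⟨1 - T, by ring⟩
  have hu₀ : 0 ≤ u := by linarith
  have hs2' := one_sub_one_sub_mul_exp_mem_Icc hu₀ (by linarith)
  rw [sub_sub_cancel] at hs2
  rw [← hs2] at hs2'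
  have hsqrt := abs_le.mp (abs_sqrt_two_mul_sub_le hu₀ (by linarith) hs hs2')
  have hu2s : u ≤ 2 * s := by
    have : √2 < 3 / 2 := by
      rw [Real.sqrt_lt' (by norm_num)]
      norm_num
    nlinarith [pow_nonneg hu₀ 3]
  have hu3 : u ^ 3 ≤ 8 * s ^ 3 := by
    have := pow_le_pow_left₀ hu₀ hu2s 3
    linarith [show (2 * s) ^ 3 = 8 * s ^ 3 by ring]
  rw [abs_le]
  constructor <;> nlinarith [hs2'.1, hs2'.2, pow_nonneg hu₀ 3, pow_nonneg hu₀ 4]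

lemma rpow_three_halves {x : ℝ} (hx : 0 ≤ x) : x ^ (3 / 2 : ℝ) = √x ^ 3 := by
  rw [Real.sqrt_eq_rpow, ← Real.rpow_natCast, ← Real.rpow_mul hx]
  norm_num

/-- Puiseux expansion of `T` at `z = 1/e`:
`T(z) = 1 − √2·√(1−ez) + (2/3)(1−ez) + O((1−ez)^{3/2})` as `z → 1/e` from the left. -/
theorem treeFn_puiseux :
    (fun z : ℝ =>
        treeFn z - (1 - Real.sqrt 2 * Real.sqrt (1 - Real.exp 1 * z)
          + (2 / 3) * (1 - Real.exp 1 * z)))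
      =O[nhdsWithin (Real.exp 1)⁻¹ (Set.Iio (Real.exp 1)⁻¹)]
      fun z : ℝ => (1 - Real.exp 1 * z) ^ (3 / 2 : ℝ) := by
  refine IsBigO.of_bound 16 ?_
  filter_upwards [Ioo_mem_nhdsLT exp_neg_half_div_two_lt_inv_exp_one] with z ⟨hz₀, hz⟩
  have hz₀' : 0 ≤ z := by linarith [exp_pos (-(1 / 2))]
  have hez : 0 ≤ 1 - exp 1 * z := by
    have := mul_lt_mul_of_pos_left hz (exp_pos 1)
    rw [mul_inv_cancel₀ (exp_pos 1).ne'] at this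
    linarith
  have key := abs_sub_puiseux_le (half_lt_treeFn hz₀ hz).le (treeFn_lt_one hz₀' hz).le
    (sqrt_nonneg _) (by rw [sq_sqrt hez, treeFn_mul_exp_one_sub_treeFn
      (abs_lt_of_mem_Icc_zero ⟨hz₀', le_rfl⟩ hz)])
  rwa [sq_sqrt hez, ← rpow_three_halves hez, ← Real.norm_eq_abs,
    ← Real.norm_of_nonneg (rpow_nonneg hez _)] at key
end

section
/- (1−zw)·e^{−z(1−w)} ⊙_z Set^(z,w) = [Set^(−z,w) + z·(w/(1−w))·(d/dz)Set^(−z,w)] evaluated at z ↦ (1−w)z, where Set^(z,w) = Σ_{n≥0} zⁿ/(n!·(1+w)^{C(n,2)}) and ⊙_z is the exponential Hadamard product in z. -/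
open PowerSeries

noncomputable abbrev K := RatFunc ℚ

/-- The exponential Hadamard product in `z`. -/
noncomputable def expHadamard (A B : PowerSeries K) : PowerSeries K :=
  PowerSeries.mk fun n => (coeff n A) * (coeff n B) * (n.factorial : K)

/-- `Set^(z,w) = Σ_{n≥0} zⁿ/(n!·(1+w)^{C(n,2)})`. -/
noncomputable def setGGF : PowerSeries K :=
  PowerSeries.mk fun n => ((1 + RatFunc.X) ^ (n.choose 2) * (n.factorial : K))⁻¹

/-! The exponential Hadamard product with `e^{bz}` rescales `z ↦ bz`, and with `z e^{bz}` it gives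
`z · G'(bz)`. For `b = w - 1 = (-1)(1 - w)` the left side is therefore `G((w-1)z) - w z G'((w-1)z)`,
and the chain rule turns the right side into the same series. -/

theorem RatFunc.one_sub_X_ne_zero {F : Type*} [CommRing F] [IsDomain F] :
    (1 - RatFunc.X : RatFunc F) ≠ 0 := by
  rw [← neg_sub, neg_ne_zero, ← RatFunc.algebraMap_X, ← map_one (algebraMap (Polynomial F) _),
    ← map_sub, ← Polynomial.C_1]
  exact RatFunc.algebraMap_ne_zero (Polynomial.X_sub_C_ne_zero 1)

namespace PowerSeries

variable {R : Type*} [CommSemiring R]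

theorem rescale_C (a c : R) : rescale a (C c) = C c := by
  ext (_ | n) <;> simp [coeff_C]

theorem derivative_rescale (a : R) (f : R⟦X⟧) :
    d⁄dX R (rescale a f) = C a * rescale a (d⁄dX R f) := by
  ext n
  simp only [coeff_derivative, coeff_rescale, coeff_C_mul, pow_succ]
  ring

end PowerSeries

theorem expHadamard_sub_left (A B G : K⟦X⟧) :
    expHadamard (A - B) G = expHadamard A G - expHadamard B G := by
  ext n
  simp only [expHadamard, coeff_mk, map_sub]
  ring

theorem expHadamard_C_mul_left (c : K) (A G : K⟦X⟧) :
    expHadamard (C c * A) G = C c * expHadamard A G := by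
  ext n
  simp only [expHadamard, coeff_mk, coeff_C_mul]
  ring

theorem expHadamard_rescale_exp (b : K) (G : K⟦X⟧) :
    expHadamard (rescale b (exp K)) G = rescale b G := by
  ext n
  have : (n.factorial : K) ≠ 0 := Nat.cast_ne_zero.mpr n.factorial_ne_zero
  simp only [expHadamard, coeff_mk, coeff_rescale, coeff_exp, map_div₀, map_one, map_natCast]
  field_simp

theorem expHadamard_X_mul_rescale_exp (b : K) (G : K⟦X⟧) :
    expHadamard (X * rescale b (exp K)) G = X * rescale b (d⁄dX K G) := by
  ext (_ | n)
  · simp [expHadamard]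
  have : (n.factorial : K) ≠ 0 := Nat.cast_ne_zero.mpr n.factorial_ne_zero
  simp only [expHadamard, coeff_mk, coeff_succ_X_mul, coeff_rescale, coeff_exp, map_div₀, map_one,
    map_natCast, coeff_derivative, Nat.factorial_succ, Nat.cast_mul]
  field_simp
  push_cast
  ring

theorem expHadamard_one_sub_C_mul_X_mul_rescale_exp {w : K} (hw : 1 - w ≠ 0) (G : K⟦X⟧) :
    expHadamard ((1 - C w * X) * rescale (w - 1) (exp K)) G =
      rescale (1 - w) (rescale (-1) G + C (w / (1 - w)) * (X * d⁄dX K (rescale (-1) G))) := by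
  have hscale : (-1) * (1 - w) = w - 1 := by ring
  have hcoeff : C (w / (1 - w)) * C (1 - w) * C (-1) = -C w := by
    rw [← map_mul, ← map_mul, div_mul_cancel₀ w hw, mul_neg_one, map_neg]
  calc expHadamard ((1 - C w * X) * rescale (w - 1) (exp K)) G
      = rescale (w - 1) G - C w * (X * rescale (w - 1) (d⁄dX K G)) := by
        rw [sub_mul, one_mul, mul_assoc, expHadamard_sub_left, expHadamard_C_mul_left,
          expHadamard_rescale_exp, expHadamard_X_mul_rescale_exp]
    _ = rescale (1 - w) (rescale (-1) G + C (w / (1 - w)) * (X * d⁄dX K (rescale (-1) G))) := by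
        rw [derivative_rescale, map_add, map_mul, map_mul, map_mul, rescale_X, rescale_C,
          rescale_C, rescale_rescale, rescale_rescale, hscale]
        linear_combination (-(X * rescale (w - 1) (d⁄dX K G))) * hcoeff

set_option linter.deprecated false in
/-- `(1−zw)·e^{−z(1−w)} ⊙_z Set^(z,w)
  = [Set^(−z,w) + z·(w/(1−w))·(d/dz)Set^(−z,w)]` at `z ↦ (1−w)z`. -/
theorem hadamard_elem_setGGF :
    expHadamard
        ((1 - PowerSeries.C RatFunc.X * X) * rescale (RatFunc.X - 1) (exp K))
        setGGF =
      rescale (1 - RatFunc.X)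
        (rescale (-1) setGGF +
          PowerSeries.C (RatFunc.X / (1 - RatFunc.X)) *
            (X * derivativeFun (rescale (-1) setGGF))) :=
  expHadamard_one_sub_C_mul_X_mul_rescale_exp RatFunc.one_sub_X_ne_zero setGGF
end
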